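/- Law of large numbers for the density process: fix v ∈ (0,1] and for each integer K ≥ 1 let (Z_n^K)_{n≥0} be a Markov chain on the nonnegative integers such that, conditionally on Z_{n−1}^K, Z_n^K = Z_{n−1}^K + Σ_{j=1}^{Z_{n−1}^K} ξ_{n,j}, where the ξ_{n,j} are conditionally i.i.d. Bernoulli random variables with success probability vK/(K + Z_{n−1}^K). Let X_n^K = Z_n^K/K. If X_0^K → x_0 ≥ 0 (deterministically) as K → ∞, then for every fixed n, X_n^K converges in probability to f_n(x_0) as K → ∞, where f(x) = x + vx/(1+x) and f_n is its n-th iterate. -/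

import Mathlib

/-!
Given `Z_n = z`, the increment `Z_{n+1} - Z_n` is a sum of `z` Bernoulli variables with
parameter `p = vK/(K+z)`, driven by the generation-`(n+1)` uniforms, which are independent of
`Z_n`; and `(z + z p)/K = f(z/K)`. Hence `D_n = Z_{n+1} - Z_n - Z_n p(Z_n)` has
`E[D_n²] ≤ 2ⁿ z₀ / 4` (as `Z_n ≤ 2ⁿ z₀`), so `D_n / K → 0` in probability by Chebyshev because
`z₀/K` stays bounded. As `f` is 2-Lipschitz on `[0, ∞)`,
`|X_{n+1} - f_{n+1}(x₀)| ≤ |D_n|/K + 2 |X_n - f_n(x₀)|`, and induction on `n` concludes.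
-/

open Set Filter Topology MeasureTheory ProbabilityTheory

noncomputable section

def pcrMap (v x : ℝ) : ℝ := x + v * x / (1 + x)

lemma pcrMap_nonneg {v x : ℝ} (hv : 0 ≤ v) (hx : 0 ≤ x) : 0 ≤ pcrMap v x := by
  unfold pcrMap; positivity

lemma iterate_pcrMap_nonneg {v x : ℝ} (hv : 0 ≤ v) (hx : 0 ≤ x) (n : ℕ) :
    0 ≤ (pcrMap v)^[n] x := by
  induction n with
  | zero => exact hx
  | succ n ih => rw [Function.iterate_succ_apply']; exact pcrMap_nonneg hv ih

lemma abs_pcrMap_sub_le {v x y : ℝ} (hv : 0 ≤ v) (hx : 0 ≤ x) (hy : 0 ≤ y) :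
    |pcrMap v x - pcrMap v y| ≤ (1 + v) * |x - y| := by
  have hxy : pcrMap v x - pcrMap v y = (1 + v / ((1 + x) * (1 + y))) * (x - y) := by
    unfold pcrMap; field_simp; ring
  have hfactor : v / ((1 + x) * (1 + y)) ≤ v := div_le_self hv (by nlinarith)
  rw [hxy, abs_mul, abs_of_nonneg (by positivity)]
  gcongr

def pcrProb (v : ℝ) (K z : ℕ) : ℝ := v * K / (K + z)

lemma pcrProb_mem_Icc {v : ℝ} (hv : v ∈ Icc (0 : ℝ) 1) (K z : ℕ) :
    pcrProb v K z ∈ Icc (0 : ℝ) 1 :=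
  ⟨by have := hv.1; unfold pcrProb; positivity,
    div_le_one_of_le₀ (by nlinarith [hv.2, (Nat.cast_nonneg K : (0 : ℝ) ≤ K),
      (Nat.cast_nonneg z : (0 : ℝ) ≤ z)]) (by positivity)⟩

lemma pcrMap_div {v : ℝ} {K : ℕ} (hK : 0 < K) (z : ℕ) :
    pcrMap v (z / K) = (z + z * pcrProb v K z) / K := by
  unfold pcrMap pcrProb; field_simp

lemma indicator_one_mem_Icc {α : Type*} (s : Set α) (x : α) :
    s.indicator (1 : α → ℝ) x ∈ Icc (0 : ℝ) 1 := by
  by_cases hx : x ∈ s <;> simp [hx]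

lemma measurable_comp_of_nat {Ω β : Type*} [MeasurableSpace Ω] [MeasurableSpace β]
    {W : Ω → ℕ} (hW : Measurable W) {G : ℕ → Ω → β} (hG : ∀ z, Measurable (G z)) :
    Measurable fun ω => G (W ω) ω :=
  (measurable_from_prod_countable_left (f := fun q : Ω × ℕ => G q.2 q.1) hG).comp
    (measurable_id.prodMk hW)

section Moments

variable {Ω : Type*} [MeasurableSpace Ω] {μ : Measure Ω}

lemma integral_indicator_Iic_comp_of_map_eq {X : Ω → ℝ} (hX : Measurable X)
    (hunif : μ.map X = volume.restrict (Icc 0 1)) {a : ℝ} (ha : a ∈ Icc (0 : ℝ) 1) :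
    ∫ ω, (Iic a).indicator 1 (X ω) ∂μ = a := by
  rw [← integral_map hX.aemeasurable
    (measurable_one.indicator measurableSet_Iic).aestronglyMeasurable, hunif,
    integral_indicator_one measurableSet_Iic, measureReal_restrict_apply measurableSet_Iic]
  have hIcc : Iic a ∩ Icc 0 1 = Icc 0 a := by
    ext x
    simp only [mem_inter_iff, mem_Iic, mem_Icc]
    exact ⟨fun h => ⟨h.2.1, h.1⟩, fun h => ⟨h.2, h.1, h.2.trans ha.2⟩⟩
  simp [hIcc, ha.1]

variable [IsProbabilityMeasure μ]

lemma integral_comp_le_of_indepFun {W : Ω → ℕ} (hW : Measurable W) {M : ℕ}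
    (hWM : ∀ ω, W ω ≤ M) {G : ℕ → Ω → ℝ} (hG : ∀ z, Integrable (G z) μ)
    (hind : ∀ z, IndepFun W (G z) μ) {c : ℝ} (hc : ∀ z ≤ M, ∫ ω, G z ω ∂μ ≤ c) :
    ∫ ω, G (W ω) ω ∂μ ≤ c := by
  have hsplit : ∀ ω,
      G (W ω) ω = ∑ z ∈ Finset.range (M + 1), (W ⁻¹' {z}).indicator (G z) ω := by
    intro ω
    rw [Finset.sum_eq_single_of_mem (W ω) (Finset.mem_range.mpr (Nat.lt_succ_of_le (hWM ω)))]
    · simp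
    · intro z _ hz
      simp [Ne.symm hz]
  have hfiber : ∀ z, ∫ ω, (W ⁻¹' {z}).indicator (G z) ω ∂μ =
      μ.real (W ⁻¹' {z}) * ∫ ω, G z ω ∂μ := by
    intro z
    have hindep : IndepFun ((W ⁻¹' {z}).indicator 1) (G z) μ :=
      (hind z).comp (φ := ({z} : Set ℕ).indicator (1 : ℕ → ℝ)) (measurable_of_countable _)
        measurable_id
    rw [← integral_indicator_one (hW (measurableSet_singleton z)),
      ← hindep.integral_fun_mul_eq_mul_integral
        (measurable_one.indicator (hW (measurableSet_singleton z))).aestronglyMeasurable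
        (hG z).aestronglyMeasurable]
    congr 1
    ext ω
    by_cases hω : ω ∈ W ⁻¹' {z} <;> simp [hω]
  have htotal : ∑ z ∈ Finset.range (M + 1), μ.real (W ⁻¹' {z}) = 1 := by
    rw [sum_measureReal_preimage_singleton _ fun z _ => hW (measurableSet_singleton z),
      show W ⁻¹' ↑(Finset.range (M + 1)) = univ from
        eq_univ_of_forall fun ω => by simpa using Nat.lt_succ_of_le (hWM ω)]
    exact probReal_univ
  calc ∫ ω, G (W ω) ω ∂μ
      = ∑ z ∈ Finset.range (M + 1), μ.real (W ⁻¹' {z}) * ∫ ω, G z ω ∂μ := by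
        simp_rw [hsplit]
        rw [integral_finsetSum _ fun z _ => (hG z).indicator (hW (measurableSet_singleton z))]
        exact Finset.sum_congr rfl fun z _ => hfiber z
    _ ≤ ∑ z ∈ Finset.range (M + 1), μ.real (W ⁻¹' {z}) * c :=
        Finset.sum_le_sum fun z hz =>
          mul_le_mul_of_nonneg_left (hc z (Nat.lt_succ_iff.mp (Finset.mem_range.mp hz)))
            measureReal_nonneg
    _ = c := by rw [← Finset.sum_mul, htotal, one_mul]

lemma meas_abs_ge_le_integral_sq_div {D : Ω → ℝ} (hD : Integrable (fun ω => D ω ^ 2) μ)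
    {c : ℝ} (hc : 0 < c) :
    μ {ω | c ≤ |D ω|} ≤ ENNReal.ofReal ((∫ ω, D ω ^ 2 ∂μ) / c ^ 2) := by
  have hset : {ω | c ≤ |D ω|} = {ω | c ^ 2 ≤ D ω ^ 2} := by
    ext ω
    simp only [mem_ofPred_eq, ← sq_abs (D ω)]
    exact (pow_le_pow_iff_left₀ hc.le (abs_nonneg _) two_ne_zero).symm
  have hmarkov :=
    mul_meas_ge_le_integral_of_nonneg (.of_forall fun ω => sq_nonneg (D ω)) hD (c ^ 2)
  rw [hset, ← ofReal_measureReal]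
  exact ENNReal.ofReal_le_ofReal ((le_div_iff₀' (by positivity)).mpr hmarkov)

end Moments

section BranchingChain

variable {Ω : Type*} (U : ℕ → ℕ → Ω → ℝ) (p : ℕ → ℝ)

def replications (n z : ℕ) (ω : Ω) : ℕ :=
  ∑ j ∈ Finset.range z, if U (n + 1) j ω ≤ p z then 1 else 0

lemma replications_le (n z : ℕ) (ω : Ω) : replications U p n z ω ≤ z := by
  unfold replications
  rw [Finset.sum_boole]
  exact (Finset.card_filter_le _ _).trans (Finset.card_range z).le

lemma cast_replications (n z : ℕ) (ω : Ω) :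
    (replications U p n z ω : ℝ) =
      ∑ j ∈ Finset.range z, (Iic (p z)).indicator 1 (U (n + 1) j ω) := by
  simp [replications, Set.indicator_apply]

lemma abs_replications_sub_le (n z : ℕ) (ω : Ω) (hp : p z ∈ Icc (0 : ℝ) 1) :
    |(replications U p n z ω : ℝ) - z * p z| ≤ z := by
  have hle : (replications U p n z ω : ℝ) ≤ z := by exact_mod_cast replications_le U p n z ω
  have hz : (0 : ℝ) ≤ z := z.cast_nonneg
  rw [abs_le]
  constructor <;> nlinarith [hp.1, hp.2, (replications U p n z ω).cast_nonneg (α := ℝ)]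

lemma measurable_replications [MeasurableSpace Ω] {n : ℕ}
    (hU : ∀ j, Measurable (U (n + 1) j)) (z : ℕ) : Measurable (replications U p n z) :=
  Finset.measurable_sum _ fun j _ =>
    Measurable.ite (measurableSet_le (hU j) measurable_const) measurable_const measurable_const

abbrev sigmaOf (S : Set (ℕ × ℕ)) : MeasurableSpace Ω :=
  ⨆ q ∈ S, MeasurableSpace.comap (U q.1 q.2) inferInstance

lemma measurable_sigmaOf {S : Set (ℕ × ℕ)} {q : ℕ × ℕ} (hq : q ∈ S) :
    Measurable[sigmaOf U S] (U q.1 q.2) :=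
  Measurable.of_comap_le
    (le_iSup₂ (f := fun q (_ : q ∈ S) => MeasurableSpace.comap (U q.1 q.2) inferInstance) q hq)

lemma sigmaOf_mono {S T : Set (ℕ × ℕ)} (hST : S ⊆ T) : sigmaOf U S ≤ sigmaOf U T :=
  biSup_mono hST

lemma sigmaOf_le [MeasurableSpace Ω] (hU : ∀ m j, Measurable (U m j)) (S : Set (ℕ × ℕ)) :
    sigmaOf U S ≤ ‹MeasurableSpace Ω› :=
  iSup₂_le fun q _ => (hU q.1 q.2).comap_le

lemma indep_sigmaOf [MeasurableSpace Ω] {μ : Measure Ω} (hU : ∀ m j, Measurable (U m j))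
    (hind : iIndepFun (fun q : ℕ × ℕ => U q.1 q.2) μ) {S T : Set (ℕ × ℕ)}
    (hST : Disjoint S T) : Indep (sigmaOf U S) (sigmaOf U T) μ := by
  have hiIndep :
      iIndep (fun q : ℕ × ℕ => MeasurableSpace.comap (U q.1 q.2) inferInstance) μ :=
    hind.iIndep
  have hle : ∀ q : ℕ × ℕ,
      MeasurableSpace.comap (U q.1 q.2) inferInstance ≤ ‹MeasurableSpace Ω› :=
    fun q => (hU q.1 q.2).comap_le
  exact indep_iSup_of_disjoint hle hiIndep hST

variable (Z : ℕ → Ω → ℕ)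

lemma chain_le_two_pow_mul (hZ : ∀ n ω, Z (n + 1) ω = Z n ω + replications U p n (Z n ω) ω)
    (n : ℕ) (ω : Ω) : Z n ω ≤ 2 ^ n * Z 0 ω := by
  induction n with
  | zero => simp
  | succ n ih =>
    have := replications_le U p n (Z n ω) ω
    rw [hZ, pow_succ, mul_comm _ 2, mul_assoc]
    omega

lemma measurable_chain (hZ : ∀ n ω, Z (n + 1) ω = Z n ω + replications U p n (Z n ω) ω)
    (hZ0 : Measurable[sigmaOf U {q | q.1 ≤ 0}] (Z 0)) (n : ℕ) :
    Measurable[sigmaOf U {q | q.1 ≤ n}] (Z n) := by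
  induction n with
  | zero => exact hZ0
  | succ n ih =>
    let _ := sigmaOf U {q | q.1 ≤ n + 1}
    have hZn : Measurable (Z n) :=
      ih.mono (sigmaOf_mono U fun q (hq : q.1 ≤ n) => show q.1 ≤ n + 1 by omega) le_rfl
    have hUn : ∀ j, Measurable (U (n + 1) j) := fun j =>
      measurable_sigmaOf U (q := (n + 1, j)) (le_refl (n + 1))
    rw [show Z (n + 1) = fun ω => Z n ω + replications U p n (Z n ω) ω from funext (hZ n)]
    exact measurable_comp_of_nat (G := fun z ω => z + replications U p n z ω) hZn fun z =>
      measurable_const.add (measurable_replications U p hUn z)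

variable [MeasurableSpace Ω] {μ : Measure Ω} [IsProbabilityMeasure μ]

lemma integral_replications {n : ℕ} (hU : ∀ j, Measurable (U (n + 1) j))
    (hunif : ∀ j, μ.map (U (n + 1) j) = volume.restrict (Icc 0 1)) {z : ℕ}
    (hp : p z ∈ Icc (0 : ℝ) 1) :
    ∫ ω, (replications U p n z ω : ℝ) ∂μ = z * p z := by
  simp_rw [cast_replications]
  rw [integral_finsetSum (f := fun j ω => (Iic (p z)).indicator 1 (U (n + 1) j ω)) _
    fun j _ => (memLp_of_bounded (.of_forall fun ω => indicator_one_mem_Icc _ _)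
      ((measurable_one.indicator measurableSet_Iic).comp (hU j)).aestronglyMeasurable
        1).integrable le_rfl]
  simp [integral_indicator_Iic_comp_of_map_eq (hU _) (hunif _) hp]

lemma variance_replications_le (hU : ∀ m j, Measurable (U m j))
    (hind : iIndepFun (fun q : ℕ × ℕ => U q.1 q.2) μ) (n z : ℕ) :
    Var[fun ω => (replications U p n z ω : ℝ); μ] ≤ z / 4 := by
  set X : ℕ → Ω → ℝ := fun j => (Iic (p z)).indicator 1 ∘ U (n + 1) j
  have hX : ∀ j, Measurable (X j) := fun j =>
    (measurable_one.indicator measurableSet_Iic).comp (hU _ _)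
  have hXIcc : ∀ j, ∀ᵐ ω ∂μ, X j ω ∈ Icc (0 : ℝ) 1 := fun j =>
    .of_forall fun ω => indicator_one_mem_Icc _ _
  have hsum : (fun ω => (replications U p n z ω : ℝ)) = ∑ j ∈ Finset.range z, X j := by
    rw [Finset.sum_fn]; ext ω; exact cast_replications U p n z ω
  rw [hsum, IndepFun.variance_sum
    (fun j _ => memLp_of_bounded (hXIcc j) (hX j).aestronglyMeasurable 2)
    (fun i _ j _ hij => (hind.indepFun (by simpa using hij : (n + 1, i) ≠ (n + 1, j))).comp
      (measurable_one.indicator measurableSet_Iic) (measurable_one.indicator measurableSet_Iic))]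
  calc ∑ j ∈ Finset.range z, Var[X j; μ] ≤ ∑ j ∈ Finset.range z, ((1 - 0) / 2) ^ 2 :=
        Finset.sum_le_sum fun j _ => variance_le_sq_of_bounded (hXIcc j) (hX j).aemeasurable
    _ = z / 4 := by simp; ring

lemma integral_sq_replications_sub_le (hU : ∀ m j, Measurable (U m j))
    (hind : iIndepFun (fun q : ℕ × ℕ => U q.1 q.2) μ)
    (hunif : ∀ m j, μ.map (U m j) = volume.restrict (Icc 0 1)) (n : ℕ) {z : ℕ}
    (hp : p z ∈ Icc (0 : ℝ) 1) :
    ∫ ω, ((replications U p n z ω : ℝ) - z * p z) ^ 2 ∂μ ≤ z / 4 := by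
  rw [← integral_replications U p (hU (n + 1)) (hunif (n + 1)) hp,
    ← variance_eq_integral (X := fun ω => (replications U p n z ω : ℝ))
      (measurable_from_nat.comp (measurable_replications U p (hU (n + 1)) z)).aemeasurable]
  exact variance_replications_le U p hU hind n z

lemma memLp_replications_sub {n : ℕ} (hU : ∀ j, Measurable (U (n + 1) j)) {z : ℕ}
    (hp : p z ∈ Icc (0 : ℝ) 1) :
    MemLp (fun ω => (replications U p n z ω : ℝ) - z * p z) 2 μ :=
  memLp_of_bounded (a := -z) (b := z)
    (.of_forall fun ω => abs_le.mp (abs_replications_sub_le U p n z ω hp))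
    ((measurable_from_nat.comp (measurable_replications U p hU z)).sub_const _).aestronglyMeasurable
    2

lemma integral_sq_chain_sub_le (hU : ∀ m j, Measurable (U m j))
    (hind : iIndepFun (fun q : ℕ × ℕ => U q.1 q.2) μ)
    (hunif : ∀ m j, μ.map (U m j) = volume.restrict (Icc 0 1))
    (hp : ∀ z, p z ∈ Icc (0 : ℝ) 1)
    (hZ : ∀ n ω, Z (n + 1) ω = Z n ω + replications U p n (Z n ω) ω)
    (hZ0 : Measurable[sigmaOf U {q | q.1 ≤ 0}] (Z 0)) {n M : ℕ} (hM : ∀ ω, Z n ω ≤ M) :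
    ∫ ω, ((replications U p n (Z n ω) ω : ℝ) - Z n ω * p (Z n ω)) ^ 2 ∂μ ≤ M / 4 := by
  have hpast : Measurable[sigmaOf U {q | q.1 ≤ n}] (Z n) := measurable_chain U p Z hZ hZ0 n
  have hnext : ∀ z, Measurable[sigmaOf U {q | q.1 = n + 1}]
      (fun ω => ((replications U p n z ω : ℝ) - z * p z) ^ 2) := by
    let _ := sigmaOf U {q | q.1 = n + 1}
    exact fun z => ((measurable_from_nat.comp (measurable_replications U p
      (fun j => measurable_sigmaOf U (q := (n + 1, j)) rfl) z)).sub_const _).pow_const 2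
  have hindep : Indep (sigmaOf U {q | q.1 ≤ n}) (sigmaOf U {q | q.1 = n + 1}) μ :=
    indep_sigmaOf U hU hind
      (disjoint_left.mpr fun q (h1 : q.1 ≤ n) (h2 : q.1 = n + 1) => by omega)
  refine integral_comp_le_of_indepFun
    (G := fun z ω => ((replications U p n z ω : ℝ) - z * p z) ^ 2)
    (hpast.mono (sigmaOf_le U hU _) le_rfl) hM
    (fun z => (memLp_replications_sub U p (hU (n + 1)) (hp z)).integrable_sq)
    (fun z => (IndepFun_iff_Indep _ _ μ).mpr
      (indep_of_indep_of_le_right (indep_of_indep_of_le_left hindep hpast.comap_le)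
        (hnext z).comap_le)) fun z hz => ?_
  calc _ ≤ (z : ℝ) / 4 := integral_sq_replications_sub_le U p hU hind hunif n (hp z)
    _ ≤ M / 4 := by gcongr

lemma measure_chain_deviation_le (hU : ∀ m j, Measurable (U m j))
    (hind : iIndepFun (fun q : ℕ × ℕ => U q.1 q.2) μ)
    (hunif : ∀ m j, μ.map (U m j) = volume.restrict (Icc 0 1))
    (hp : ∀ z, p z ∈ Icc (0 : ℝ) 1)
    (hZ : ∀ n ω, Z (n + 1) ω = Z n ω + replications U p n (Z n ω) ω)
    (hZ0 : Measurable[sigmaOf U {q | q.1 ≤ 0}] (Z 0)) {n M : ℕ} (hM : ∀ ω, Z n ω ≤ M)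
    {c : ℝ} (hc : 0 < c) :
    μ {ω | c ≤ |(replications U p n (Z n ω) ω : ℝ) - Z n ω * p (Z n ω)|} ≤
      ENNReal.ofReal (M / 4 / c ^ 2) := by
  have hZn : Measurable (Z n) :=
    (measurable_chain U p Z hZ hZ0 n).mono (sigmaOf_le U hU _) le_rfl
  have hmeas : Measurable fun ω => (replications U p n (Z n ω) ω : ℝ) - Z n ω * p (Z n ω) :=
    measurable_comp_of_nat (G := fun z ω => (replications U p n z ω : ℝ) - z * p z) hZn
      fun z => (measurable_from_nat.comp (measurable_replications U p (hU (n + 1)) z)).sub_const _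
  have hint : Integrable
      (fun ω => ((replications U p n (Z n ω) ω : ℝ) - Z n ω * p (Z n ω)) ^ 2) μ :=
    (memLp_of_bounded (a := -M) (b := M)
      (.of_forall fun ω => abs_le.mp ((abs_replications_sub_le U p n _ ω (hp _)).trans
        (by exact_mod_cast hM ω)))
      hmeas.aestronglyMeasurable 2).integrable_sq
  refine (meas_abs_ge_le_integral_sq_div hint hc).trans (ENNReal.ofReal_le_ofReal ?_)
  gcongr
  exact integral_sq_chain_sub_le U p Z hU hind hunif hp hZ hZ0 hM

end BranchingChain

lemma tendsto_div_mul_sq_of_tendsto_div {a : ℕ → ℝ} {x : ℝ}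
    (ha : Tendsto (fun K : ℕ => a K / K) atTop (𝓝 x)) (ε : ℝ) :
    Tendsto (fun K : ℕ => a K / (ε * K) ^ 2) atTop (𝓝 0) := by
  have h := (ha.div_const (ε ^ 2)).mul tendsto_one_div_atTop_nhds_zero_nat
  rw [mul_zero] at h
  exact h.congr fun K => by ring

lemma measure_density_deviation_succ_le {Ω : Type*} [MeasurableSpace Ω] {μ : Measure Ω}
    [IsProbabilityMeasure μ] {v : ℝ} (hv : v ∈ Icc (0 : ℝ) 1) {K : ℕ} (hK : 0 < K)
    {U : ℕ → ℕ → Ω → ℝ} (hU : ∀ m j, Measurable (U m j))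
    (hind : iIndepFun (fun q : ℕ × ℕ => U q.1 q.2) μ)
    (hunif : ∀ m j, μ.map (U m j) = volume.restrict (Icc 0 1)) {Z : ℕ → Ω → ℕ}
    (hZ : ∀ n ω, Z (n + 1) ω = Z n ω + replications U (pcrProb v K) n (Z n ω) ω)
    {z₀ : ℕ} (hZ0 : ∀ ω, Z 0 ω = z₀) (n : ℕ) {y : ℝ} (hy : 0 ≤ y) {ε : ℝ} (hε : 0 < ε) :
    μ {ω | ε ≤ |(Z (n + 1) ω : ℝ) / K - pcrMap v y|} ≤
      ENNReal.ofReal (2 ^ n * z₀ / (ε * K) ^ 2) + μ {ω | ε / 4 ≤ |(Z n ω : ℝ) / K - y|} := by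
  have hKpos : (0 : ℝ) < K := by exact_mod_cast hK
  have hZ0meas : Measurable[sigmaOf U {q | q.1 ≤ 0}] (Z 0) := by
    rw [funext hZ0]; exact measurable_const
  have hM : ∀ ω, Z n ω ≤ 2 ^ n * z₀ := fun ω => by
    simpa [hZ0] using chain_le_two_pow_mul U (pcrProb v K) Z hZ n ω
  set D : Ω → ℝ := fun ω =>
    (replications U (pcrProb v K) n (Z n ω) ω : ℝ) - Z n ω * pcrProb v K (Z n ω)
  have hincl : {ω | ε ≤ |(Z (n + 1) ω : ℝ) / K - pcrMap v y|} ⊆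
      {ω | ε * K / 2 ≤ |D ω|} ∪ {ω | ε / 4 ≤ |(Z n ω : ℝ) / K - y|} := by
    intro ω hω
    by_contra hcon
    simp only [mem_union, mem_ofPred_eq, not_or, not_le] at hω hcon
    obtain ⟨hD, hX⟩ := hcon
    have hstep : (Z (n + 1) ω : ℝ) / K - pcrMap v (Z n ω / K) = D ω / K := by
      rw [pcrMap_div hK, hZ]; push_cast; ring
    have hfirst : |(Z (n + 1) ω : ℝ) / K - pcrMap v (Z n ω / K)| < ε / 2 := by
      rw [hstep, abs_div, abs_of_pos hKpos, div_lt_iff₀ hKpos]; linarith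
    have hsecond : |pcrMap v (Z n ω / K) - pcrMap v y| ≤ ε / 2 :=
      calc _ ≤ (1 + v) * |(Z n ω : ℝ) / K - y| := abs_pcrMap_sub_le hv.1 (by positivity) hy
        _ ≤ 2 * (ε / 4) := by gcongr; linarith [hv.2]
        _ = ε / 2 := by ring
    linarith [abs_sub_le ((Z (n + 1) ω : ℝ) / K) (pcrMap v (Z n ω / K)) (pcrMap v y)]
  calc _ ≤ μ ({ω | ε * K / 2 ≤ |D ω|} ∪ {ω | ε / 4 ≤ |(Z n ω : ℝ) / K - y|}) :=
        measure_mono hincl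
    _ ≤ μ {ω | ε * K / 2 ≤ |D ω|} + μ {ω | ε / 4 ≤ |(Z n ω : ℝ) / K - y|} :=
        measure_union_le _ _
    _ ≤ _ := by
      gcongr
      refine (measure_chain_deviation_le U (pcrProb v K) Z hU hind hunif (pcrProb_mem_Icc hv K)
        hZ hZ0meas hM (by positivity : 0 < ε * K / 2)).trans_eq ?_
      congr 1
      push_cast
      ring

/-- Law of large numbers for the density process of the PCR model: for each `K ≥ 1`,
`Z_n^K` is the Markov chain in which, given `Z_{n−1}^K`, each of the `Z_{n−1}^K`
molecules independently produces one extra copy with probability `vK/(K + Z_{n−1}^K)`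
(the conditionally i.i.d. Bernoulli replication variables being realized as indicators
`ξ_{n,j} = 1{U_{n,j} ≤ vK/(K+Z_{n−1}^K)}` of i.i.d. uniform-`[0,1]` variables `U_{n,j}`).
If the initial densities `X_0^K = Z_0^K/K` converge (deterministically) to `x₀ ≥ 0` as
`K → ∞`, then for every fixed `n` the density `X_n^K = Z_n^K/K` converges in probability
to `f^[n](x₀)` as `K → ∞`. -/
theorem pcr_density_LLN (v : ℝ) (hv : v ∈ Set.Ioc (0:ℝ) 1)
    (f : ℝ → ℝ) (hf : ∀ x, f x = x + v * x / (1 + x))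
    (x0 : ℝ) (hx0 : 0 ≤ x0)
    (Ω : ℕ → Type) [mΩ : ∀ K, MeasureSpace (Ω K)]
    [hprob : ∀ K, IsProbabilityMeasure (ℙ : Measure (Ω K))]
    -- i.i.d. uniform-[0,1] random variables driving the replication events
    (U : (K : ℕ) → ℕ → ℕ → Ω K → ℝ)
    (hUmeas : ∀ K n j, Measurable (U K n j))
    (hUindep : ∀ K, iIndepFun
        (fun p : ℕ × ℕ => U K p.1 p.2) ℙ)
    (hUunif : ∀ K n j,
        Measure.map (U K n j) ℙ = (volume : Measure ℝ).restrict (Set.Icc 0 1))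
    -- the PCR Markov chain with carrying parameter K, started from z0 K molecules
    (Z : (K : ℕ) → ℕ → Ω K → ℕ) (z0 : ℕ → ℕ)
    (hZ0 : ∀ K, 1 ≤ K → ∀ ω, Z K 0 ω = z0 K)
    (hZrec : ∀ K, 1 ≤ K → ∀ n, ∀ ω, Z K (n + 1) ω = Z K n ω +
        ∑ j ∈ Finset.range (Z K n ω),
          if U K (n + 1) j ω ≤ v * (K : ℝ) / ((K : ℝ) + (Z K n ω : ℝ)) then 1 else 0)
    -- deterministic convergence of the initial densities
    (hinit : Tendsto (fun K : ℕ => (z0 K : ℝ) / (K : ℝ)) atTop (𝓝 x0)) :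
    ∀ n : ℕ, ∀ ε : ℝ, 0 < ε →
      Tendsto (fun K : ℕ =>
          (ℙ : Measure (Ω K)) {ω | ε ≤ |(Z K n ω : ℝ) / (K : ℝ) - f^[n] x0|})
        atTop (𝓝 (0 : ENNReal)) := by
  obtain ⟨hv0, hv1⟩ := hv
  obtain rfl : f = pcrMap v := funext hf
  intro n
  induction n with
  | zero =>
    intro ε hε
    refine tendsto_const_nhds.congr' ?_
    filter_upwards [Metric.tendsto_nhds.mp hinit ε hε, eventually_ge_atTop 1] with K hclose hK
    have hfar : ¬ ε ≤ |(z0 K : ℝ) / K - x0| := not_le.mpr hclose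
    simp [hZ0 K hK, hfar]
  | succ n ih =>
    intro ε hε
    have hstep : ∀ᶠ K in atTop, (ℙ : Measure (Ω K))
        {ω | ε ≤ |(Z K (n + 1) ω : ℝ) / K - (pcrMap v)^[n + 1] x0|} ≤
          ENNReal.ofReal (2 ^ n * z0 K / (ε * K) ^ 2) +
            ℙ {ω | ε / 4 ≤ |(Z K n ω : ℝ) / K - (pcrMap v)^[n] x0|} := by
      filter_upwards [eventually_ge_atTop 1] with K hK
      rw [Function.iterate_succ_apply']
      exact measure_density_deviation_succ_le ⟨hv0.le, hv1⟩ hK (hUmeas K) (hUindep K)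
        (hUunif K) (hZrec K hK) (hZ0 K hK) n (iterate_pcrMap_nonneg hv0.le hx0 n) hε
    have hvanish := ENNReal.tendsto_ofReal (tendsto_div_mul_sq_of_tendsto_div
      (a := fun K => 2 ^ n * z0 K) (by simpa [mul_div_assoc] using hinit.const_mul (2 ^ n)) ε)
    exact tendsto_of_tendsto_of_tendsto_of_le_of_le' tendsto_const_nhds
      (by simpa using hvanish.add (ih (ε / 4) (by positivity))) (.of_forall fun _ => zero_le)
      hstep

end
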